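/- arXiv:2603.25586 — 2 statements merged into one kernel-verified Lean document; each statement's English description precedes it below -/
import Mathlib

section
/- In the Artin group of type A_l, the square of the fundamental element satisfies Δ² = (x₁ x₂ ⋯ x_l)^{l+1}. -/
/-- `asc x a b = x a * x (a+1) * ⋯ * x b`. -/
def asc {G : Type*} [Monoid G] (x : ℕ → G) (a b : ℕ) : G :=
  ((List.Ico a (b + 1)).map x).prod

namespace DeltaSqAux

variable {G : Type*} [Group G]

theorem prod_shift (g : G) (f f' : ℕ → G) :
    ∀ L : List ℕ, (∀ k ∈ L, g * f k = f' k * g) →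
      g * (L.map f).prod = (L.map f').prod * g := by
  intro L
  induction L with
  | nil => simp
  | cons k t ih =>
    intro h
    simp only [List.map_cons, List.prod_cons]
    rw [← mul_assoc, h k (by simp), mul_assoc, ih (fun j hj => h j (by simp [hj])),
      ← mul_assoc]

theorem asc_empty (x : ℕ → G) {a b : ℕ} (h : b < a) : asc x a b = 1 := by
  rw [asc, List.Ico.eq_nil_of_le h]; simp

theorem asc_self (x : ℕ → G) (a : ℕ) : asc x a a = x a := by
  rw [asc, List.Ico.succ_singleton]; simp

theorem asc_succ (x : ℕ → G) {a b : ℕ} (h : a ≤ b + 1) :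
    asc x a (b + 1) = asc x a b * x (b + 1) := by
  rw [asc, asc, List.Ico.succ_top h]; simp

theorem asc_split (x : ℕ → G) {a c b : ℕ} (h1 : a ≤ c + 1) (h2 : c ≤ b) :
    asc x a b = asc x a c * asc x (c + 1) b := by
  rw [asc, asc, asc, ← List.prod_append, ← List.map_append,
    List.Ico.append_consecutive h1 (by omega)]

end DeltaSqAux

namespace DeltaSqAux

variable {G : Type*} [Group G]

theorem shift_one (l : ℕ) (x : ℕ → G)
    (hbraid : ∀ i, 1 ≤ i → i + 1 ≤ l →
      x i * x (i + 1) * x i = x (i + 1) * x i * x (i + 1))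
    (hcomm : ∀ i j, 1 ≤ i → i + 2 ≤ j → j ≤ l → x i * x j = x j * x i)
    {a b i : ℕ} (ha : 1 ≤ a) (hb : b ≤ l) (h1 : a ≤ i) (h2 : i + 1 ≤ b) :
    asc x a b * x i = x (i + 1) * asc x a b := by
  obtain ⟨j, rfl⟩ : ∃ j, i = j + 1 := ⟨i - 1, by omega⟩
  have e1 : asc x a b = asc x a (j + 2) * asc x (j + 3) b :=
    asc_split x (by omega) (by omega)
  have e2 : asc x a (j + 2) = asc x a j * asc x (j + 1) (j + 2) :=
    asc_split x (by omega) (by omega)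
  have e3 : asc x (j + 1) (j + 2) = x (j + 1) * x (j + 2) := by
    rw [asc_succ x (by omega), asc_self]
  set A := asc x a j with hA
  set B := asc x (j + 3) b with hB
  set u := x (j + 1) with hu
  set v := x (j + 2) with hv
  have c1 : B * u = u * B := by
    rw [hB, asc]
    exact (prod_shift u x x _ (fun k hk => by
      have hk' := List.Ico.mem.mp hk
      exact hcomm (j + 1) k (by omega) (by omega) (by omega))).symm
  have c2 : A * (v * (u * (v * B))) = v * (A * (u * (v * B))) := by
    have c2' : v * A = A * v := by
      rw [hA, asc]
      exact prod_shift v x x _ (fun k hk => by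
        have hk' := List.Ico.mem.mp hk
        exact (hcomm k (j + 2) (by omega) (by omega) (by omega)).symm)
    rw [← mul_assoc, ← c2', mul_assoc]
  have hb2 : u * (v * (u * B)) = v * (u * (v * B)) := by
    have h := hbraid (j + 1) (by omega) (by omega)
    calc u * (v * (u * B)) = (x (j+1) * x (j+2) * x (j+1)) * B := by
            simp only [hu, hv, mul_assoc]
      _ = (x (j+2) * x (j+1) * x (j+2)) * B := by rw [h]
      _ = v * (u * (v * B)) := by simp only [hu, hv, mul_assoc]
  rw [e1, e2, e3]
  simp only [mul_assoc]
  rw [c1, hb2, c2]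

end DeltaSqAux

namespace DeltaSqAux

variable {G : Type*} [Group G]

/-- The fundamental element on generators `x a, …, x b`. -/
def Dfun (x : ℕ → G) (a b : ℕ) : G :=
  ((List.Ico a (b + 1)).reverse.map (fun k => asc x a k)).prod

/-- `descfun x a b = x b * x (b-1) * ⋯ * x a`. -/
def descfun (x : ℕ → G) (a b : ℕ) : G :=
  ((List.Ico a (b + 1)).reverse.map x).prod

theorem shift_asc (l : ℕ) (x : ℕ → G)
    (hbraid : ∀ i, 1 ≤ i → i + 1 ≤ l →
      x i * x (i + 1) * x i = x (i + 1) * x i * x (i + 1))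
    (hcomm : ∀ i j, 1 ≤ i → i + 2 ≤ j → j ≤ l → x i * x j = x j * x i)
    {a b k : ℕ} (ha : 1 ≤ a) (hb : b ≤ l) (hk : k + 1 ≤ b) :
    asc x a b * asc x a k = asc x (a + 1) (k + 1) * asc x a b := by
  have h2 : asc x (a + 1) (k + 1) = ((List.Ico a (k + 1)).map (fun i => x (i + 1))).prod := by
    rw [asc, ← List.Ico.map_add a (k + 1) 1, List.map_map]
    simp [Function.comp_def, Nat.add_comm]
  rw [h2]
  exact prod_shift _ x _ _ (fun i hi => by
    have hi' := List.Ico.mem.mp hi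
    exact shift_one l x hbraid hcomm ha hb hi'.1 (by omega))

theorem Dfun_peel (x : ℕ → G) {a b : ℕ} (h : a ≤ b) :
    Dfun x a b = asc x a b * ((List.Ico a b).reverse.map (fun k => asc x a k)).prod := by
  rw [Dfun, List.Ico.succ_top h, List.reverse_append]
  simp

theorem descfun_peel (x : ℕ → G) {a b : ℕ} (h : a ≤ b) :
    descfun x a b = x b * ((List.Ico a b).reverse.map x).prod := by
  rw [descfun, List.Ico.succ_top h, List.reverse_append]
  simp

theorem Dprev_shift (l : ℕ) (x : ℕ → G)
    (hbraid : ∀ i, 1 ≤ i → i + 1 ≤ l →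
      x i * x (i + 1) * x i = x (i + 1) * x i * x (i + 1))
    (hcomm : ∀ i j, 1 ≤ i → i + 2 ≤ j → j ≤ l → x i * x j = x j * x i)
    {a b c : ℕ} (ha : 1 ≤ a) (hb : b ≤ l) (hcb : c ≤ b) :
    asc x a b * ((List.Ico a c).reverse.map (fun k => asc x a k)).prod =
      ((List.Ico (a + 1) (c + 1)).reverse.map (fun k => asc x (a + 1) k)).prod * asc x a b := by
  have h2 : ((List.Ico (a + 1) (c + 1)).reverse.map (fun k => asc x (a + 1) k)) =
      ((List.Ico a c).reverse.map (fun k => asc x (a + 1) (k + 1))) := by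
    rw [← List.Ico.map_add a c 1, ← List.map_reverse, List.map_map]
    simp [Function.comp_def, Nat.add_comm]
  rw [h2]
  exact prod_shift _ _ _ _ (fun k hk => by
    have hk' := List.Ico.mem.mp (List.mem_reverse.mp hk)
    exact shift_asc l x hbraid hcomm ha hb (by omega))

theorem D_shift (l : ℕ) (x : ℕ → G)
    (hbraid : ∀ i, 1 ≤ i → i + 1 ≤ l →
      x i * x (i + 1) * x i = x (i + 1) * x i * x (i + 1))
    (hcomm : ∀ i j, 1 ≤ i → i + 2 ≤ j → j ≤ l → x i * x j = x j * x i)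
    {a b : ℕ} (ha : 1 ≤ a) (hb : b ≤ l) (hab : a ≤ b) :
    Dfun x a b = Dfun x (a + 1) b * asc x a b := by
  rw [Dfun_peel x hab, Dprev_shift l x hbraid hcomm ha hb le_rfl]
  rfl

end DeltaSqAux

namespace DeltaSqAux

variable {G : Type*} [Group G]

theorem Rlem (l : ℕ) (x : ℕ → G)
    (hbraid : ∀ i, 1 ≤ i → i + 1 ≤ l →
      x i * x (i + 1) * x i = x (i + 1) * x i * x (i + 1))
    (hcomm : ∀ i j, 1 ≤ i → i + 2 ≤ j → j ≤ l → x i * x j = x j * x i) :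
    ∀ n a, 1 ≤ a → a + n ≤ l →
      Dfun x a (a + n) =
        ((List.Ico a (a + n)).reverse.map (fun k => asc x a k)).prod * descfun x a (a + n) := by
  intro n
  induction n with
  | zero =>
    intro a ha hl
    simp [Dfun, descfun, List.Ico.succ_singleton, List.Ico.self_empty, asc_self]
  | succ n ih =>
    intro a ha hl
    rw [show a + (n + 1) = a + n + 1 from rfl]
    have e1 : Dfun x a (a + n + 1) = asc x a (a + n + 1) * Dfun x a (a + n) := by
      rw [Dfun_peel x (show a ≤ a + n + 1 by omega)]
      rfl
    have e2 : asc x a (a + n + 1) *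
        ((List.Ico a (a + n)).reverse.map (fun k => asc x a k)).prod =
        Dfun x (a + 1) (a + n) * asc x a (a + n + 1) := by
      rw [Dprev_shift l x hbraid hcomm ha (show a + n + 1 ≤ l by omega)
        (show a + n ≤ a + n + 1 by omega)]
      rfl
    have e3 : ((List.Ico a (a + n + 1)).reverse.map (fun k => asc x a k)).prod =
        Dfun x a (a + n) := rfl
    have e4 : descfun x a (a + n + 1) = x (a + n + 1) * descfun x a (a + n) :=
      descfun_peel x (show a ≤ a + n + 1 by omega)
    calc Dfun x a (a + n + 1)
        = asc x a (a + n + 1) *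
            (((List.Ico a (a + n)).reverse.map (fun k => asc x a k)).prod *
              descfun x a (a + n)) := by rw [e1, ih a ha (by omega)]
      _ = (asc x a (a + n + 1) *
            ((List.Ico a (a + n)).reverse.map (fun k => asc x a k)).prod) *
              descfun x a (a + n) := by rw [mul_assoc]
      _ = Dfun x (a + 1) (a + n) * asc x a (a + n + 1) * descfun x a (a + n) := by rw [e2]
      _ = Dfun x (a + 1) (a + n) * (asc x a (a + n) * (x (a + n + 1) *
            descfun x a (a + n))) := by
          rw [asc_succ x (show a ≤ a + n + 1 by omega)]
          simp only [mul_assoc]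
      _ = (Dfun x (a + 1) (a + n) * asc x a (a + n)) * descfun x a (a + n + 1) := by
          rw [e4, mul_assoc]
      _ = Dfun x a (a + n) * descfun x a (a + n + 1) := by
          rw [← D_shift l x hbraid hcomm ha (show a + n ≤ l by omega)
            (show a ≤ a + n by omega)]
      _ = ((List.Ico a (a + n + 1)).reverse.map (fun k => asc x a k)).prod *
            descfun x a (a + n + 1) := by rw [e3]

theorem Qpow (l : ℕ) (x : ℕ → G)
    (hbraid : ∀ i, 1 ≤ i → i + 1 ≤ l →
      x i * x (i + 1) * x i = x (i + 1) * x i * x (i + 1))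
    (hcomm : ∀ i j, 1 ≤ i → i + 2 ≤ j → j ≤ l → x i * x j = x j * x i)
    {a b : ℕ} (ha : 1 ≤ a) (hb : b ≤ l) :
    ∀ m j, a ≤ j → j + m ≤ b → asc x a b ^ m * x j = x (j + m) * asc x a b ^ m := by
  intro m
  induction m with
  | zero => intro j _ _; simp
  | succ m ih =>
    intro j hj hjm
    rw [pow_succ]
    calc asc x a b ^ m * asc x a b * x j
        = asc x a b ^ m * (x (j + 1) * asc x a b) := by
          rw [mul_assoc, shift_one l x hbraid hcomm ha hb hj (by omega)]
      _ = (asc x a b ^ m * x (j + 1)) * asc x a b := by rw [mul_assoc]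
      _ = x (j + 1 + m) * asc x a b ^ m * asc x a b := by
          rw [ih (j + 1) (by omega) (by omega)]
      _ = x (j + (m + 1)) * (asc x a b ^ m * asc x a b) := by
          rw [show j + 1 + m = j + (m + 1) by omega, mul_assoc]

theorem Qlem (l : ℕ) (x : ℕ → G)
    (hbraid : ∀ i, 1 ≤ i → i + 1 ≤ l →
      x i * x (i + 1) * x i = x (i + 1) * x i * x (i + 1))
    (hcomm : ∀ i j, 1 ≤ i → i + 2 ≤ j → j ≤ l → x i * x j = x j * x i)
    {a c : ℕ} (ha : 1 ≤ a) (hc : c + 1 ≤ l) :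
    ∀ m j, a ≤ j → j + m = c + 2 →
      asc x a c ^ m * ((List.Ico j (c + 2)).reverse.map x).prod = asc x a (c + 1) ^ m := by
  intro m
  induction m with
  | zero =>
    intro j hj hjm
    simp [List.Ico.eq_nil_of_le (show c + 2 ≤ j by omega)]
  | succ m ih =>
    intro j hj hjm
    have hj' : j < c + 2 := by omega
    rw [List.Ico.eq_cons hj', List.reverse_cons, List.map_append, List.prod_append]
    calc asc x a c ^ (m + 1) *
          (((List.Ico (j + 1) (c + 2)).reverse.map x).prod * ([j].map x).prod)
        = asc x a c * (asc x a c ^ m *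
            ((List.Ico (j + 1) (c + 2)).reverse.map x).prod) * x j := by
          rw [pow_succ']
          simp [mul_assoc]
      _ = asc x a c * asc x a (c + 1) ^ m * x j := by rw [ih (j + 1) (by omega) (by omega)]
      _ = asc x a c * (x (j + m) * asc x a (c + 1) ^ m) := by
          rw [mul_assoc, Qpow l x hbraid hcomm ha hc m j hj (by omega)]
      _ = (asc x a c * x (c + 1)) * asc x a (c + 1) ^ m := by
          rw [show j + m = c + 1 by omega, mul_assoc]
      _ = asc x a (c + 1) ^ (m + 1) := by
          rw [← asc_succ x (show a ≤ c + 1 by omega), ← pow_succ']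

theorem Plem (l : ℕ) (x : ℕ → G)
    (hbraid : ∀ i, 1 ≤ i → i + 1 ≤ l →
      x i * x (i + 1) * x i = x (i + 1) * x i * x (i + 1))
    (hcomm : ∀ i j, 1 ≤ i → i + 2 ≤ j → j ≤ l → x i * x j = x j * x i) :
    ∀ n a, 1 ≤ a → a + n ≤ l →
      Dfun x a (a + n) ^ 2 = asc x a (a + n) ^ (n + 2) := by
  intro n
  induction n with
  | zero =>
    intro a ha hl
    simp [Dfun, List.Ico.succ_singleton, asc_self]
  | succ n ih =>
    intro a ha hl
    have hR := Rlem l x hbraid hcomm (n + 1) a ha hl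
    rw [show a + (n + 1) = a + n + 1 from rfl] at hR ⊢
    have e1 : Dfun x a (a + n + 1) = asc x a (a + n + 1) * Dfun x a (a + n) := by
      rw [Dfun_peel x (show a ≤ a + n + 1 by omega)]
      rfl
    have e2 : Dfun x a (a + n + 1) = Dfun x a (a + n) * descfun x a (a + n + 1) := by
      rw [hR]
      rfl
    have ih' : Dfun x a (a + n) * Dfun x a (a + n) = asc x a (a + n) ^ (n + 2) := by
      rw [← sq]; exact ih a ha (by omega)
    have e3 : asc x a (a + n) ^ (n + 2) * descfun x a (a + n + 1) =
        asc x a (a + n + 1) ^ (n + 2) := by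
      exact Qlem l x hbraid hcomm ha (show a + n + 1 ≤ l by omega) (n + 2) a le_rfl (by omega)
    rw [sq]
    nth_rewrite 2 [e2]
    nth_rewrite 1 [e1]
    rw [mul_assoc, ← mul_assoc (Dfun x a (a + n)), ih', e3, ← pow_succ']

end DeltaSqAux

/-- In the Artin group of type `A_l`, with fundamental element
`Δ = (x₁⋯x_l)(x₁⋯x_{l-1})⋯(x₁x₂)x₁`, one has `Δ² = (x₁ x₂ ⋯ x_l)^{l+1}`
(Brieskorn–Saito), stated in any group whose elements `x 1, …, x l` satisfy the
braid relations. -/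
theorem delta_sq_A {G : Type*} [Group G] (l : ℕ) (x : ℕ → G)
    (hbraid : ∀ i, 1 ≤ i → i + 1 ≤ l →
      x i * x (i + 1) * x i = x (i + 1) * x i * x (i + 1))
    (hcomm : ∀ i j, 1 ≤ i → i + 2 ≤ j → j ≤ l → x i * x j = x j * x i) :
    (((List.Ico 1 (l + 1)).reverse.map (fun k => asc x 1 k)).prod : G) ^ 2 =
      (asc x 1 l) ^ (l + 1) := by
  cases l with
  | zero =>
    simp [asc, List.Ico.self_empty]
  | succ m =>
    have h := DeltaSqAux.Plem (m + 1) x hbraid hcomm m 1 le_rfl (by omega)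
    rw [show 1 + m = m + 1 from Nat.add_comm 1 m] at h
    exact h
end

section
/- In the Artin group of type B_l with generators x₁,…,x_l (x₁,x₂ satisfying the 4-length relation, consecutive x_i, x_{i+1} for i≥2 the braid relation, others commuting), the fundamental element factors as Δ(B_l) = (x_l⋯x₂)(x₁⋯x_{l-1})(x_l⋯x₂)(x₁⋯x_{l-1}) · Δ(B_{l-2}) for l ≥ 3, where Δ(B_{l-2}) is the fundamental element of the parabolic subgroup on x₁,…,x_{l-2}. -/
/-- `desc x a b = x b * x (b-1) * ⋯ * x a`. -/
def desc {G : Type*} [Monoid G] (x : ℕ → G) (a b : ℕ) : G :=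
  ((List.Ico a (b + 1)).reverse.map x).prod

section basic
variable {G : Type*} [Monoid G] (x : ℕ → G)

lemma asc_empty {a b : ℕ} (h : b < a) : asc x a b = 1 := by
  simp [asc, List.Ico.eq_nil_of_le h]

lemma desc_empty {a b : ℕ} (h : b < a) : desc x a b = 1 := by
  simp [desc, List.Ico.eq_nil_of_le h]

lemma asc_self (a : ℕ) : asc x a a = x a := by
  simp [asc, List.Ico.succ_singleton]

lemma desc_self (a : ℕ) : desc x a a = x a := by
  simp [desc, List.Ico.succ_singleton]

lemma asc_top {a b : ℕ} (h : a ≤ b + 1) : asc x a (b + 1) = asc x a b * x (b + 1) := by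
  simp [asc, List.Ico.succ_top h]

lemma desc_top {a b : ℕ} (h : a ≤ b + 1) : desc x a (b + 1) = x (b + 1) * desc x a b := by
  simp [desc, List.Ico.succ_top h]

lemma asc_bot {a b : ℕ} (h : a ≤ b) : asc x a b = x a * asc x (a + 1) b := by
  simp [asc, List.Ico.eq_cons (Nat.lt_succ_of_le h)]

lemma desc_bot {a b : ℕ} (h : a ≤ b) : desc x a b = desc x (a + 1) b * x a := by
  simp [desc, List.Ico.eq_cons (Nat.lt_succ_of_le h)]

lemma commute_asc {j a b : ℕ} (h : ∀ k, a ≤ k → k ≤ b → Commute (x j) (x k)) :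
    Commute (x j) (asc x a b) := by
  apply Commute.list_prod_right
  intro y hy
  obtain ⟨k, hk, rfl⟩ := List.mem_map.1 hy
  rw [List.Ico.mem] at hk
  exact h k hk.1 (by omega)

lemma commute_desc {j a b : ℕ} (h : ∀ k, a ≤ k → k ≤ b → Commute (x j) (x k)) :
    Commute (x j) (desc x a b) := by
  apply Commute.list_prod_right
  intro y hy
  obtain ⟨k, hk, rfl⟩ := List.mem_map.1 hy
  rw [List.mem_reverse, List.Ico.mem] at hk
  exact h k hk.1 (by omega)

end basic

section rel
variable {G : Type*} [Group G] (l : ℕ) (x : ℕ → G)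
variable (h4 : x 1 * x 2 * x 1 * x 2 = x 2 * x 1 * x 2 * x 1)
variable (hbraid : ∀ i, 2 ≤ i → i + 1 ≤ l →
      x i * x (i + 1) * x i = x (i + 1) * x i * x (i + 1))
variable (hcomm : ∀ i j, 1 ≤ i → i + 2 ≤ j → j ≤ l → x i * x j = x j * x i)

include hcomm in
lemma commute_asc_of_lt {j a b : ℕ} (h1 : 1 ≤ a) (h2 : b + 2 ≤ j) (h3 : j ≤ l) :
    Commute (x j) (asc x a b) :=
  commute_asc x fun k hk hk' => ((hcomm k j (by omega) (by omega) h3).symm : _ = _)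

include hcomm in
lemma commute_desc_of_lt {j a b : ℕ} (h1 : 1 ≤ a) (h2 : b + 2 ≤ j) (h3 : j ≤ l) :
    Commute (x j) (desc x a b) :=
  commute_desc x fun k hk hk' => ((hcomm k j (by omega) (by omega) h3).symm : _ = _)


include hcomm in
lemma commute_asc_of_gt {j a b : ℕ} (h1 : 1 ≤ j) (h2 : j + 2 ≤ a) (h3 : b ≤ l) :
    Commute (x j) (asc x a b) :=
  commute_asc x fun k hk _ => hcomm j k h1 (by omega) (by omega)

include hcomm in
lemma commute_desc_of_gt {j a b : ℕ} (h1 : 1 ≤ j) (h2 : j + 2 ≤ a) (h3 : b ≤ l) :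
    Commute (x j) (desc x a b) :=
  commute_desc x fun k hk _ => hcomm j k h1 (by omega) (by omega)

lemma asc_split {a b c : ℕ} (h1 : a ≤ c + 1) (h2 : c ≤ b) :
    asc x a b = asc x a c * asc x (c + 1) b := by
  rw [asc, asc, asc, ← List.prod_append, ← List.map_append,
    List.Ico.append_consecutive h1 (by omega)]

lemma desc_split {a b c : ℕ} (h1 : a ≤ c + 1) (h2 : c ≤ b) :
    desc x a b = desc x (c + 1) b * desc x a c := by
  rw [desc, desc, desc, ← List.prod_append, ← List.map_append, ← List.reverse_append,
    List.Ico.append_consecutive h1 (by omega)]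

include hbraid hcomm in
lemma semiconj_asc {a i n : ℕ} (h1 : 1 ≤ a) (h2 : a ≤ i) (h3 : 2 ≤ i) (hin : i + 1 ≤ n)
    (hnl : n ≤ l) : SemiconjBy (asc x a n) (x i) (x (i + 1)) := by
  obtain ⟨j, rfl⟩ : ∃ j, i = j + 2 := ⟨i - 2, by omega⟩
  have e : asc x a n = asc x a (j + 1) * (x (j + 2) * x (j + 3)) * asc x (j + 4) n := by
    rw [asc_split x (show a ≤ (j + 3) + 1 by omega) (show j + 3 ≤ n by omega),
      asc_top x (show a ≤ j + 3 by omega), asc_top x (show a ≤ j + 2 by omega)]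
    simp only [show j + 1 + 1 = j + 2 from by omega, show j + 2 + 1 = j + 3 from by omega,
      show j + 3 + 1 = j + 4 from by omega, mul_assoc]
  rw [show j + 2 + 1 = j + 3 from by omega, e]
  refine SemiconjBy.mul_left (y := x (j + 2))
    (SemiconjBy.mul_left (y := x (j + 3)) ?_ ?_) ?_
  · exact (commute_asc_of_lt l x hcomm (by omega) (by omega) (by omega)).symm.semiconjBy
  · show _ * _ = _ * _
    rw [← mul_assoc, hbraid (j + 2) (by omega) (by omega), mul_assoc]
  · exact (commute_asc_of_gt l x hcomm (by omega) (by omega) (by omega)).symm.semiconjBy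

include hbraid hcomm in
lemma semiconj_desc {i m : ℕ} (h3 : 2 ≤ i) (him : i + 1 ≤ m) (hml : m ≤ l) :
    SemiconjBy (desc x 1 m) (x (i + 1)) (x i) := by
  obtain ⟨j, rfl⟩ : ∃ j, i = j + 2 := ⟨i - 2, by omega⟩
  have e : desc x 1 m = desc x (j + 4) m * (x (j + 3) * x (j + 2)) * desc x 1 (j + 1) := by
    rw [desc_split x (show (1:ℕ) ≤ (j + 3) + 1 by omega) (show j + 3 ≤ m by omega),
      desc_top x (show (1:ℕ) ≤ j + 3 by omega), desc_top x (show (1:ℕ) ≤ j + 2 by omega)]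
    simp only [show j + 1 + 1 = j + 2 from by omega, show j + 2 + 1 = j + 3 from by omega,
      show j + 3 + 1 = j + 4 from by omega, mul_assoc]
  rw [show j + 2 + 1 = j + 3 from by omega, e]
  refine SemiconjBy.mul_left (y := x (j + 3))
    (SemiconjBy.mul_left (y := x (j + 2)) ?_ ?_) ?_
  · exact (commute_desc_of_gt l x hcomm (by omega) (by omega) (by omega)).symm.semiconjBy
  · show _ * _ = _ * _
    rw [← mul_assoc, ← hbraid (j + 2) (by omega) (by omega), mul_assoc]
  · exact (commute_desc_of_lt l x hcomm (by omega) (by omega) (by omega)).symm.semiconjBy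

include hbraid hcomm in
lemma semiconj_asc_desc {n : ℕ} (hnl : n ≤ l) :
    ∀ b a, 2 ≤ a → b + 1 ≤ n →
      SemiconjBy (asc x 1 n) (desc x a b) (desc x (a + 1) (b + 1)) := by
  intro b
  induction b with
  | zero =>
    intro a ha _
    rw [desc_empty x (by omega), desc_empty x (by omega)]
    exact SemiconjBy.one_right _
  | succ b ih =>
    intro a ha hb
    by_cases hab : a ≤ b + 1
    · rw [desc_top x (by omega : a ≤ b + 1), desc_top x (by omega : a + 1 ≤ (b + 1) + 1)]
      exact SemiconjBy.mul_right
        (semiconj_asc l x hbraid hcomm (by omega) (by omega) (by omega) (by omega) hnl)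
        (ih a ha (by omega))
    · rw [desc_empty x (by omega), desc_empty x (by omega)]
      exact SemiconjBy.one_right _

include hbraid hcomm in
lemma lemA : ∀ j n, j + 1 ≤ n → n + 1 ≤ l →
    asc x 1 (n + 1) ^ (j + 1) = asc x 1 n ^ (j + 1) * desc x (n + 1 - j) (n + 1) := by
  intro j
  induction j with
  | zero =>
    intro n h1 h2
    rw [pow_one, pow_one, show n + 1 - 0 = n + 1 from rfl, desc_self,
      asc_top x (by omega)]
  | succ j ih =>
    intro n h1 h2
    obtain ⟨t, rfl⟩ : ∃ t, n = j + t + 2 := ⟨n - j - 2, by omega⟩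
    have IH := ih (j + t + 2) (by omega) (by omega)
    simp only [show j + t + 2 + 1 - j = t + 3 from by omega,
      show j + t + 2 + 1 = j + t + 3 from by omega] at IH
    simp only [show j + t + 2 + 1 - (j + 1) = t + 2 from by omega,
      show j + t + 2 + 1 = j + t + 3 from by omega]
    have fA : asc x 1 (j + t + 3) = asc x 1 (j + t + 2) * x (j + t + 3) := by
      have h := asc_top x (a := 1) (b := j + t + 2) (by omega)
      rwa [show j + t + 2 + 1 = j + t + 3 from by omega] at h
    have fB : asc x 1 (j + t + 2) = asc x 1 (j + t + 1) * x (j + t + 2) := by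
      have h := asc_top x (a := 1) (b := j + t + 1) (by omega)
      rwa [show j + t + 1 + 1 = j + t + 2 from by omega] at h
    have fdesc : desc x (t + 3) (j + t + 3) = x (j + t + 3) * desc x (t + 3) (j + t + 2) := by
      have h := desc_top x (a := t + 3) (b := j + t + 2) (by omega)
      rwa [show j + t + 2 + 1 = j + t + 3 from by omega] at h
    have fsemi : SemiconjBy (asc x 1 (j + t + 2)) (desc x (t + 2) (j + t + 1))
        (desc x (t + 3) (j + t + 2)) := by
      have h := semiconj_asc_desc l x hbraid hcomm (n := j + t + 2) (by omega)
        (j + t + 1) (t + 2) (by omega) (by omega)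
      rwa [show t + 2 + 1 = t + 3 from by omega,
        show j + t + 1 + 1 = j + t + 2 from by omega] at h
    have fc2 : Commute (x (j + t + 3)) (desc x (t + 2) (j + t + 1)) :=
      commute_desc_of_lt l x hcomm (by omega) (by omega) (by omega)
    have fcA : Commute (x (j + t + 3)) (asc x 1 (j + t + 1)) :=
      commute_asc_of_lt l x hcomm (by omega) (by omega) (by omega)
    have braid : x (j + t + 2) * x (j + t + 3) * x (j + t + 2) =
        x (j + t + 3) * x (j + t + 2) * x (j + t + 3) := by
      have h := hbraid (j + t + 2) (by omega) (by omega)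
      rwa [show j + t + 2 + 1 = j + t + 3 from by omega] at h
    have fbd : x (j + t + 2) * desc x (t + 2) (j + t + 1) = desc x (t + 2) (j + t + 2) := by
      have h := desc_top x (a := t + 2) (b := j + t + 1) (by omega)
      rw [show j + t + 1 + 1 = j + t + 2 from by omega] at h
      exact h.symm
    have fcd : x (j + t + 3) * desc x (t + 2) (j + t + 2) = desc x (t + 2) (j + t + 3) := by
      have h := desc_top x (a := t + 2) (b := j + t + 2) (by omega)
      rw [show j + t + 2 + 1 = j + t + 3 from by omega] at h
      exact h.symm
    have h1' : ∀ g : G, desc x (t + 3) (j + t + 2) * (asc x 1 (j + t + 2) * g) =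
        asc x 1 (j + t + 2) * (desc x (t + 2) (j + t + 1) * g) := fun g => by
      rw [← mul_assoc, ← fsemi.eq, mul_assoc]
    have h3' : ∀ g : G, x (j + t + 3) * (asc x 1 (j + t + 2) * g) =
        asc x 1 (j + t + 1) * (x (j + t + 3) * (x (j + t + 2) * g)) := fun g => by
      rw [fB]
      simp only [← mul_assoc]
      rw [fcA.eq]
    have hbr : ∀ g : G, x (j + t + 3) * (x (j + t + 2) * (x (j + t + 3) * g)) =
        x (j + t + 2) * (x (j + t + 3) * (x (j + t + 2) * g)) := fun g => by
      simp only [← mul_assoc]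
      rw [← braid]
    have key2 : desc x (t + 3) (j + t + 3) * (asc x 1 (j + t + 2) * x (j + t + 3)) =
        asc x 1 (j + t + 2) * desc x (t + 2) (j + t + 3) :=
      calc desc x (t + 3) (j + t + 3) * (asc x 1 (j + t + 2) * x (j + t + 3))
          = x (j + t + 3) * (desc x (t + 3) (j + t + 2) *
              (asc x 1 (j + t + 2) * x (j + t + 3))) := by rw [fdesc, mul_assoc]
        _ = x (j + t + 3) * (asc x 1 (j + t + 2) *
              (desc x (t + 2) (j + t + 1) * x (j + t + 3))) := by rw [h1']
        _ = x (j + t + 3) * (asc x 1 (j + t + 2) *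
              (x (j + t + 3) * desc x (t + 2) (j + t + 1))) := by rw [← fc2.eq]
        _ = asc x 1 (j + t + 1) * (x (j + t + 3) * (x (j + t + 2) *
              (x (j + t + 3) * desc x (t + 2) (j + t + 1)))) := by rw [h3']
        _ = asc x 1 (j + t + 1) * (x (j + t + 2) * (x (j + t + 3) *
              (x (j + t + 2) * desc x (t + 2) (j + t + 1)))) := by rw [hbr]
        _ = asc x 1 (j + t + 1) * (x (j + t + 2) * (x (j + t + 3) *
              desc x (t + 2) (j + t + 2))) := by rw [fbd]
        _ = asc x 1 (j + t + 2) * (x (j + t + 3) * desc x (t + 2) (j + t + 2)) := by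
            rw [fB, mul_assoc]
        _ = asc x 1 (j + t + 2) * desc x (t + 2) (j + t + 3) := by rw [fcd]
    calc asc x 1 (j + t + 3) ^ (j + 1 + 1)
        = asc x 1 (j + t + 3) ^ (j + 1) * asc x 1 (j + t + 3) := pow_succ _ _
      _ = asc x 1 (j + t + 2) ^ (j + 1) * desc x (t + 3) (j + t + 3) *
            (asc x 1 (j + t + 2) * x (j + t + 3)) := by rw [IH, fA]
      _ = asc x 1 (j + t + 2) ^ (j + 1) * (desc x (t + 3) (j + t + 3) *
            (asc x 1 (j + t + 2) * x (j + t + 3))) := by rw [mul_assoc]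
      _ = asc x 1 (j + t + 2) ^ (j + 1) * (asc x 1 (j + t + 2) *
            desc x (t + 2) (j + t + 3)) := by rw [key2]
      _ = asc x 1 (j + t + 2) ^ (j + 1 + 1) * desc x (t + 2) (j + t + 3) := by
          rw [← mul_assoc, ← pow_succ]

include hbraid hcomm in
lemma star {n : ℕ} (h1 : 1 ≤ n) (h2 : n + 1 ≤ l) :
    asc x 1 (n + 1) ^ (n + 1) =
      asc x 1 n ^ n * (desc x 1 (n + 1) * asc x 2 (n + 1)) := by
  obtain ⟨j, rfl⟩ : ∃ j, n = j + 1 := ⟨n - 1, by omega⟩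
  have IH := lemA l x hbraid hcomm j (j + 1) (by omega) (by omega)
  simp only [show j + 1 + 1 - j = 2 from by omega,
    show j + 1 + 1 = j + 2 from by omega] at IH ⊢
  have fA : asc x 1 (j + 2) = asc x 1 (j + 1) * x (j + 2) := by
    have h := asc_top x (a := 1) (b := j + 1) (by omega)
    rwa [show j + 1 + 1 = j + 2 from by omega] at h
  have key3 : desc x 2 (j + 2) * (asc x 1 (j + 1) * x (j + 2)) =
      desc x 1 (j + 2) * asc x 2 (j + 2) := by
    have e1 : desc x 2 (j + 2) = x (j + 2) * desc x 2 (j + 1) := by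
      have h := desc_top x (a := 2) (b := j + 1) (by omega)
      rwa [show j + 1 + 1 = j + 2 from by omega] at h
    have e2 : asc x 1 (j + 1) = x 1 * asc x 2 (j + 1) := asc_bot x (by omega)
    have e3 : desc x 1 (j + 2) = x (j + 2) * desc x 1 (j + 1) := by
      have h := desc_top x (a := 1) (b := j + 1) (by omega)
      rwa [show j + 1 + 1 = j + 2 from by omega] at h
    have e4 : desc x 1 (j + 1) = desc x 2 (j + 1) * x 1 := desc_bot x (by omega)
    have e5 : asc x 2 (j + 2) = asc x 2 (j + 1) * x (j + 2) := by
      have h := asc_top x (a := 2) (b := j + 1) (by omega)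
      rwa [show j + 1 + 1 = j + 2 from by omega] at h
    rw [e1, e2, e3, e4, e5]
    simp only [mul_assoc]
  calc asc x 1 (j + 2) ^ (j + 2)
      = asc x 1 (j + 2) ^ (j + 1) * asc x 1 (j + 2) := pow_succ _ _
    _ = asc x 1 (j + 1) ^ (j + 1) * desc x 2 (j + 2) * (asc x 1 (j + 1) * x (j + 2)) := by
        rw [IH, fA]
    _ = asc x 1 (j + 1) ^ (j + 1) * (desc x 2 (j + 2) * (asc x 1 (j + 1) * x (j + 2))) := by
        rw [mul_assoc]
    _ = asc x 1 (j + 1) ^ (j + 1) * (desc x 1 (j + 2) * asc x 2 (j + 2)) := by rw [key3]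

include h4 hbraid hcomm in
lemma key {m i : ℕ} (h1 : 1 ≤ i) (h2 : i + 1 ≤ m) (h3 : m ≤ l) :
    Commute (x i) (desc x 1 m * asc x 2 m) := by
  rcases Nat.lt_or_ge i 2 with hi | hi
  · have hi1 : i = 1 := by omega
    subst hi1
    have e1 : desc x 1 m = desc x 3 m * (x 2 * x 1) := by
      rw [desc_split x (show (1:ℕ) ≤ 2 + 1 by omega) (show 2 ≤ m by omega),
        show desc x 1 2 = x 2 * desc x 1 1 from desc_top x (by omega), desc_self]
    have e2 : asc x 2 m = x 2 * asc x 3 m := asc_bot x (by omega)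
    have c1 : Commute (x 1) (desc x 3 m) :=
      commute_desc_of_gt l x hcomm (by omega) (by omega) h3
    have c2 : Commute (x 1) (asc x 3 m) :=
      commute_asc_of_gt l x hcomm (by omega) (by omega) h3
    have H4 : ∀ g : G, x 1 * (x 2 * (x 1 * (x 2 * g))) =
        x 2 * (x 1 * (x 2 * (x 1 * g))) := fun g => by
      simp only [← mul_assoc]
      rw [h4]
    have Hc1 : ∀ g : G, x 1 * (desc x 3 m * g) = desc x 3 m * (x 1 * g) := fun g => by
      rw [← mul_assoc, c1.eq, mul_assoc]
    show _ * _ = _ * _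
    rw [e1, e2]
    simp only [mul_assoc]
    rw [Hc1, H4, c2.eq]
  · have hd := semiconj_desc l x hbraid hcomm hi h2 h3
    have ha := semiconj_asc l x hbraid hcomm (a := 2) (i := i) (by omega) hi hi h2 h3
    exact Commute.symm (SemiconjBy.mul_left hd ha)

include h4 hbraid hcomm in
lemma commute_P_asc {m a b : ℕ} (hml : m ≤ l) (h1 : 1 ≤ a) (hb : b + 1 ≤ m) :
    Commute (desc x 1 m * asc x 2 m) (asc x a b) := by
  apply Commute.list_prod_right
  intro y hy
  obtain ⟨k, hk, rfl⟩ := List.mem_map.1 hy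
  rw [List.Ico.mem] at hk
  exact (key l x h4 hbraid hcomm (by omega) (by omega) hml).symm

include h4 hbraid hcomm in
lemma commute_P_desc {m a b : ℕ} (hml : m ≤ l) (h1 : 1 ≤ a) (hb : b + 1 ≤ m) :
    Commute (desc x 1 m * asc x 2 m) (desc x a b) := by
  apply Commute.list_prod_right
  intro y hy
  obtain ⟨k, hk, rfl⟩ := List.mem_map.1 hy
  rw [List.mem_reverse, List.Ico.mem] at hk
  exact (key l x h4 hbraid hcomm (by omega) (by omega) hml).symm

end rel

/-- In the Artin group of type `B_l` (`l ≥ 3`), the fundamental element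
`Δ(B_l) = (x₁⋯x_l)^l` factors as
`Δ(B_l) = (x_l⋯x₂)(x₁⋯x_{l-1})(x_l⋯x₂)(x₁⋯x_{l-1}) · Δ(B_{l-2})`, where
`Δ(B_{l-2}) = (x₁⋯x_{l-2})^{l-2}` is the fundamental element of the parabolic subgroup
on `x₁, …, x_{l-2}`; stated in any group whose elements satisfy the type `B_l` Artin
relations. -/
theorem delta_B_double_recursion {G : Type*} [Group G] (l : ℕ) (hl : 3 ≤ l) (x : ℕ → G)
    (h4 : x 1 * x 2 * x 1 * x 2 = x 2 * x 1 * x 2 * x 1)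
    (hbraid : ∀ i, 2 ≤ i → i + 1 ≤ l →
      x i * x (i + 1) * x i = x (i + 1) * x i * x (i + 1))
    (hcomm : ∀ i j, 1 ≤ i → i + 2 ≤ j → j ≤ l → x i * x j = x j * x i) :
    (asc x 1 l) ^ l =
      (desc x 2 l * asc x 1 (l - 1) * desc x 2 l * asc x 1 (l - 1)) *
        (asc x 1 (l - 2)) ^ (l - 2) := by
  obtain ⟨t, rfl⟩ : ∃ t, l = t + 3 := ⟨l - 3, by omega⟩
  simp only [show t + 3 - 1 = t + 2 from by omega, show t + 3 - 2 = t + 1 from by omega]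
  have S3 := star (t + 3) x hbraid hcomm (n := t + 2) (by omega) (by omega)
  rw [show t + 2 + 1 = t + 3 from by omega] at S3
  have S2 := star (t + 3) x hbraid hcomm (n := t + 1) (by omega) (by omega)
  rw [show t + 1 + 1 = t + 2 from by omega] at S2
  have c3d : Commute (desc x 1 (t + 3) * asc x 2 (t + 3)) (desc x 1 (t + 2)) :=
    commute_P_desc (t + 3) x h4 hbraid hcomm (by omega) (by omega) (by omega)
  have c3a : Commute (desc x 1 (t + 3) * asc x 2 (t + 3)) (asc x 2 (t + 2)) :=
    commute_P_asc (t + 3) x h4 hbraid hcomm (by omega) (by omega) (by omega)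
  have c32 : Commute (desc x 1 (t + 3) * asc x 2 (t + 3))
      (desc x 1 (t + 2) * asc x 2 (t + 2)) := c3d.mul_right c3a
  have c31 : Commute (desc x 1 (t + 3) * asc x 2 (t + 3)) (asc x 1 (t + 1) ^ (t + 1)) :=
    (commute_P_asc (t + 3) x h4 hbraid hcomm (a := 1) (b := t + 1)
      (by omega) (by omega) (by omega)).pow_right _
  have c21 : Commute (desc x 1 (t + 2) * asc x 2 (t + 2)) (asc x 1 (t + 1) ^ (t + 1)) :=
    (commute_P_asc (t + 3) x h4 hbraid hcomm (m := t + 2) (a := 1) (b := t + 1)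
      (by omega) (by omega) (by omega)).pow_right _
  have hQ : desc x 1 (t + 3) * asc x 2 (t + 3) * (desc x 1 (t + 2) * asc x 2 (t + 2)) =
      desc x 2 (t + 3) * asc x 1 (t + 2) * desc x 2 (t + 3) * asc x 1 (t + 2) := by
    have a1 : desc x 1 (t + 3) = desc x 2 (t + 3) * x 1 := desc_bot x (by omega)
    have a2 : asc x 2 (t + 3) = asc x 2 (t + 2) * x (t + 3) := by
      have h := asc_top x (a := 2) (b := t + 2) (by omega)
      rwa [show t + 2 + 1 = t + 3 from by omega] at h
    have a3 : desc x 1 (t + 2) = desc x 2 (t + 2) * x 1 := desc_bot x (by omega)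
    have a4 : asc x 1 (t + 2) = x 1 * asc x 2 (t + 2) := asc_bot x (by omega)
    have a5 : desc x 2 (t + 3) = x (t + 3) * desc x 2 (t + 2) := by
      have h := desc_top x (a := 2) (b := t + 2) (by omega)
      rwa [show t + 2 + 1 = t + 3 from by omega] at h
    rw [a1, a2, a3, a4, a5]
    simp only [mul_assoc]
  calc asc x 1 (t + 3) ^ (t + 3)
      = asc x 1 (t + 2) ^ (t + 2) * (desc x 1 (t + 3) * asc x 2 (t + 3)) := S3
    _ = asc x 1 (t + 1) ^ (t + 1) * (desc x 1 (t + 2) * asc x 2 (t + 2)) *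
          (desc x 1 (t + 3) * asc x 2 (t + 3)) := by rw [S2]
    _ = desc x 1 (t + 3) * asc x 2 (t + 3) *
          (asc x 1 (t + 1) ^ (t + 1) * (desc x 1 (t + 2) * asc x 2 (t + 2))) :=
        ((c31.mul_right c32).eq).symm
    _ = desc x 1 (t + 3) * asc x 2 (t + 3) *
          (desc x 1 (t + 2) * asc x 2 (t + 2) * asc x 1 (t + 1) ^ (t + 1)) := by
        rw [c21.eq]
    _ = desc x 1 (t + 3) * asc x 2 (t + 3) * (desc x 1 (t + 2) * asc x 2 (t + 2)) *
          asc x 1 (t + 1) ^ (t + 1) := by rw [← mul_assoc]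
    _ = desc x 2 (t + 3) * asc x 1 (t + 2) * desc x 2 (t + 3) * asc x 1 (t + 2) *
          asc x 1 (t + 1) ^ (t + 1) := by rw [hQ]
end
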